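/- arXiv:2602.21898 — 12 statements merged into one kernel-verified Lean document; each statement's English description precedes it below -/
import Mathlib

section
/- Let Q be a Girard quantale with cyclic dualizing element d such that d = ⊥ (the bottom element) and the multiplication is idempotent (x ⊙ x = x for all x). Then: (i) x ⊙ y = x ⊓ y for all x,y; (ii) the lattice Q is distributive, i.e. x ⊓ (y ⊔ z) = (x ⊓ y) ⊔ (x ⊓ z) for all x,y,z; (iii) for every x, the element x° = x→⊥ is a complement of x: x ⊓ x° = ⊥ and x ⊔ x° = ⊤. Hence Q is a Boolean algebra. -/
/-- A Girard quantale with cyclic dualizing element `⊥` and idempotent multiplication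
is a Boolean algebra: multiplication is the meet, the lattice is distributive, and
`x° = x → ⊥` is a complement of `x`. -/
theorem girard_quantale_idem_bot_dualizing_boolean
    {Q : Type*} [CompleteLattice Q] (mul : Q → Q → Q)
    (assoc : ∀ x y z : Q, mul (mul x y) z = mul x (mul y z))
    (distl : ∀ (x : Q) (S : Set Q), mul x (sSup S) = ⨆ y ∈ S, mul x y)
    (distr : ∀ (x : Q) (S : Set Q), mul (sSup S) x = ⨆ y ∈ S, mul y x)
    (arrow larrow : Q → Q → Q)
    (harrow : ∀ y z : Q, arrow y z = sSup {t | mul t y ≤ z})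
    (hlarrow : ∀ z x : Q, larrow z x = sSup {t | mul x t ≤ z})
    (hcyclic : ∀ x y : Q, mul x y ≤ (⊥ : Q) ↔ mul y x ≤ (⊥ : Q))
    (hdualizing : ∀ x : Q, larrow ⊥ (arrow x ⊥) = x ∧ arrow (larrow ⊥ x) ⊥ = x)
    (hidem : ∀ x : Q, mul x x = x) :
    (∀ x y : Q, mul x y = x ⊓ y) ∧
    (∀ x y z : Q, x ⊓ (y ⊔ z) = (x ⊓ y) ⊔ (x ⊓ z)) ∧
    (∀ x : Q, x ⊓ arrow x ⊥ = ⊥ ∧ x ⊔ arrow x ⊥ = ⊤) := by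
  -- basic multiplication facts
  have mul_bot : ∀ x : Q, mul x ⊥ = ⊥ := by
    intro x
    have := distl x ∅
    simpa using this
  have bot_mul : ∀ x : Q, mul ⊥ x = ⊥ := by
    intro x
    have := distr x ∅
    simpa using this
  have mul_sup_l : ∀ x a b : Q, mul x (a ⊔ b) = mul x a ⊔ mul x b := by
    intro x a b
    have := distl x {a, b}
    simpa [iSup_or, iSup_sup_eq] using this
  have mul_sup_r : ∀ a b x : Q, mul (a ⊔ b) x = mul a x ⊔ mul b x := by
    intro a b x
    have := distr x {a, b}
    simpa [iSup_or, iSup_sup_eq] using this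
  have mono_l : ∀ {a b : Q} (x : Q), a ≤ b → mul a x ≤ mul b x := by
    intro a b x h
    have : mul (a ⊔ b) x = mul b x := by rw [sup_eq_right.mpr h]
    rw [← this, mul_sup_r]; exact le_sup_left
  have mono_r : ∀ (x : Q) {a b : Q}, a ≤ b → mul x a ≤ mul x b := by
    intro x a b h
    have : mul x (a ⊔ b) = mul x b := by rw [sup_eq_right.mpr h]
    rw [← this, mul_sup_l]; exact le_sup_left
  -- the negation adjunction
  have neg_mul : ∀ b : Q, mul (arrow b ⊥) b ≤ ⊥ := by
    intro b
    rw [harrow, distr]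
    exact iSup₂_le fun t ht => ht
  have le_neg : ∀ a b : Q, mul a b ≤ ⊥ ↔ a ≤ arrow b ⊥ := by
    intro a b
    constructor
    · intro h; rw [harrow]; exact le_sSup h
    · intro h; exact le_trans (mono_l b h) (neg_mul b)
  have le_neg' : ∀ a b : Q, mul a b ≤ ⊥ ↔ b ≤ arrow a ⊥ := fun a b =>
    (hcyclic a b).trans (le_neg b a)
  have larrow_eq : ∀ x : Q, larrow ⊥ x = arrow x ⊥ := by
    intro x
    rw [hlarrow, harrow]
    congr 1
    ext t
    exact (hcyclic x t)
  have dneg : ∀ x : Q, arrow (arrow x ⊥) ⊥ = x := by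
    intro x
    have := (hdualizing x).1
    rwa [larrow_eq] at this
  have mul_neg_self : ∀ x : Q, mul x (arrow x ⊥) = ⊥ :=
    fun x => le_antisymm ((le_neg' x _).mpr le_rfl) bot_le
  have neg_mul_self : ∀ x : Q, mul (arrow x ⊥) x = ⊥ :=
    fun x => le_antisymm (neg_mul x) bot_le
  -- mul is below both factors
  have mul_le_right : ∀ x y : Q, mul x y ≤ y := by
    intro x y
    have h : mul (mul x y) (arrow y ⊥) ≤ ⊥ := by
      rw [assoc, mul_neg_self, mul_bot]
    have := (le_neg _ _).mp h
    rwa [dneg] at this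
  have mul_le_left : ∀ x y : Q, mul x y ≤ x := by
    intro x y
    have h : mul (arrow x ⊥) (mul x y) ≤ ⊥ := by
      rw [← assoc, neg_mul_self, bot_mul]
    have := (le_neg' _ _).mp h
    rwa [dneg] at this
  -- (i)
  have mul_eq_inf : ∀ x y : Q, mul x y = x ⊓ y := by
    intro x y
    refine le_antisymm (le_inf (mul_le_left x y) (mul_le_right x y)) ?_
    calc x ⊓ y = mul (x ⊓ y) (x ⊓ y) := (hidem _).symm
      _ ≤ mul x y := le_trans (mono_l _ inf_le_left) (mono_r _ inf_le_right)
  -- negation is antitone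
  have neg_anti : ∀ {a b : Q}, a ≤ b → arrow b ⊥ ≤ arrow a ⊥ := by
    intro a b h
    exact (le_neg _ _).mp (le_trans (mono_r _ h) (neg_mul b))
  have neg_bot : arrow (⊥ : Q) ⊥ = ⊤ := by
    refine le_antisymm le_top ?_
    rw [harrow]
    exact le_sSup (by simp [mul_bot])
  refine ⟨mul_eq_inf, ?_, ?_⟩
  · -- (ii) distributivity
    intro x y z
    rw [← mul_eq_inf x (y ⊔ z), mul_sup_l, mul_eq_inf, mul_eq_inf]
  · -- (iii) complements
    intro x
    have hmeet : x ⊓ arrow x ⊥ = ⊥ := by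
      rw [← mul_eq_inf]; exact mul_neg_self x
    refine ⟨hmeet, ?_⟩
    have h1 : arrow (x ⊔ arrow x ⊥) ⊥ ≤ ⊥ := by
      have hx : arrow (x ⊔ arrow x ⊥) ⊥ ≤ arrow x ⊥ := neg_anti le_sup_left
      have hnx : arrow (x ⊔ arrow x ⊥) ⊥ ≤ x := by
        have := neg_anti (le_sup_right (a := x) (b := arrow x ⊥))
        rwa [dneg] at this
      calc arrow (x ⊔ arrow x ⊥) ⊥ ≤ x ⊓ arrow x ⊥ := le_inf hnx hx
        _ = ⊥ := hmeet
    have h2 : arrow (x ⊔ arrow x ⊥) ⊥ = ⊥ := le_antisymm h1 bot_le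
    calc x ⊔ arrow x ⊥ = arrow (arrow (x ⊔ arrow x ⊥) ⊥) ⊥ := (dneg _).symm
      _ = arrow ⊥ ⊥ := by rw [h2]
      _ = ⊤ := neg_bot
end

section
/- Let P be a unital residuated poset with unit e, equipped with an inversion ° such that for all t, x, y ∈ P: t ⊙ x ≤ y° if and only if y ⊙ t ≤ x°. Then for every x ∈ P, x° = x → e° and x° = e° ← x. -/
/-- If a unital residuated poset with unit `e` has an inversion `°` satisfying
`t ⊙ x ≤ y° ↔ y ⊙ t ≤ x°`, then `x° = x → e°` and `x° = e° ← x` for every `x`. -/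
theorem inversion_eq_arrow_neg_unit
    {P : Type*} [PartialOrder P] (mul arrow larrow : P → P → P)
    (assoc : ∀ x y z : P, mul (mul x y) z = mul x (mul y z))
    (adj₁ : ∀ x y z : P, mul x y ≤ z ↔ x ≤ arrow y z)
    (adj₂ : ∀ x y z : P, mul x y ≤ z ↔ y ≤ larrow z x)
    (e : P) (unit_left : ∀ x : P, mul e x = x) (unit_right : ∀ x : P, mul x e = x)
    (inv : P → P)
    (inv_antitone : ∀ x y : P, x ≤ y ↔ inv y ≤ inv x)
    (inv_involutive : ∀ x : P, inv (inv x) = x)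
    (hexch : ∀ t x y : P, mul t x ≤ inv y ↔ mul y t ≤ inv x) :
    ∀ x : P, inv x = arrow x (inv e) ∧ inv x = larrow (inv e) x := by
  intro x
  constructor
  · apply le_antisymm
    · rw [← adj₁]
      rw [hexch (inv x) x e, unit_left]
    · set a := arrow x (inv e) with ha
      have h1 : mul a x ≤ inv e := (adj₁ a x (inv e)).2 le_rfl
      have h2 := (hexch a x e).1 h1
      rwa [unit_left] at h2
  · apply le_antisymm
    · rw [← adj₂]
      rw [hexch x (inv x) e, unit_left, inv_involutive]
    · set b := larrow (inv e) x with hb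
      have h1 : mul x b ≤ inv e := (adj₂ x b (inv e)).2 le_rfl
      have h2 := (hexch x b e).1 h1
      rw [unit_left] at h2
      have := (inv_antitone x (inv b)).1 h2
      rwa [inv_involutive] at this
end

section
/- Let P be a unital residuated poset with unit e, equipped with an inversion ° such that x° = x → e° = e° ← x for every x ∈ P. Then e° is a cyclic dualizing element of P: for all x, y ∈ P, x ⊙ y ≤ e° if and only if y ⊙ x ≤ e°, and e° ← (x → e°) = x = (e° ← x) → e°. Hence P is a Girard poset with linear negation °. -/
/-- If a unital residuated poset with unit `e` has an inversion `°` with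
`x° = x → e° = e° ← x`, then `e°` is a cyclic dualizing element, so `P` is a
Girard poset with linear negation `°`. -/
theorem inversion_gives_girard
    {P : Type*} [PartialOrder P] (mul arrow larrow : P → P → P)
    (assoc : ∀ x y z : P, mul (mul x y) z = mul x (mul y z))
    (adj₁ : ∀ x y z : P, mul x y ≤ z ↔ x ≤ arrow y z)
    (adj₂ : ∀ x y z : P, mul x y ≤ z ↔ y ≤ larrow z x)
    (e : P) (unit_left : ∀ x : P, mul e x = x) (unit_right : ∀ x : P, mul x e = x)
    (inv : P → P)
    (inv_antitone : ∀ x y : P, x ≤ y ↔ inv y ≤ inv x)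
    (inv_involutive : ∀ x : P, inv (inv x) = x)
    (hinv : ∀ x : P, inv x = arrow x (inv e) ∧ inv x = larrow (inv e) x) :
    (∀ x y : P, mul x y ≤ inv e ↔ mul y x ≤ inv e) ∧
    (∀ x : P, larrow (inv e) (arrow x (inv e)) = x ∧
      arrow (larrow (inv e) x) (inv e) = x) := by
  constructor
  · intro x y
    rw [adj₁ x y (inv e), adj₂ y x (inv e), ← (hinv y).1, ← (hinv y).2]
  · intro x
    constructor
    · rw [← (hinv x).1, ← (hinv (inv x)).2, inv_involutive]
    · rw [← (hinv x).2, ← (hinv (inv x)).1, inv_involutive]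
end

section
/- Let P be an integral residuated lattice (a bounded lattice carrying a residuated poset structure whose multiplication ⊙ has unit equal to the top element ⊤) which is complemented: every x ∈ P has some x' with x ⊓ x' = ⊥ and x ⊔ x' = ⊤. Then the multiplication is idempotent: x ⊙ x = x for every x ∈ P. -/
/-- A complemented integral residuated lattice has idempotent multiplication. -/
theorem complemented_integral_residuated_idem
    {P : Type*} [Lattice P] [BoundedOrder P] (mul arrow larrow : P → P → P)
    (assoc : ∀ x y z : P, mul (mul x y) z = mul x (mul y z))
    (adj₁ : ∀ x y z : P, mul x y ≤ z ↔ x ≤ arrow y z)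
    (adj₂ : ∀ x y z : P, mul x y ≤ z ↔ y ≤ larrow z x)
    (unit_left : ∀ x : P, mul ⊤ x = x) (unit_right : ∀ x : P, mul x ⊤ = x)
    (hcompl : ∀ x : P, ∃ y : P, x ⊓ y = ⊥ ∧ x ⊔ y = ⊤) :
    ∀ x : P, mul x x = x := by
  -- monotonicity in the second argument
  have mono₂ : ∀ x {a b : P}, a ≤ b → mul x a ≤ mul x b := by
    intro x a b hab
    exact (adj₂ x a (mul x b)).mpr (le_trans hab ((adj₂ x b (mul x b)).mp le_rfl))
  -- mul x y ≤ x and mul x y ≤ y (integrality)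
  have le_left : ∀ x y : P, mul x y ≤ x := by
    intro x y
    calc mul x y ≤ mul x ⊤ := mono₂ x le_top
    _ = x := unit_right x
  have le_right : ∀ x y : P, mul x y ≤ y := by
    intro x y
    have h1 : mul x y ≤ mul ⊤ y :=
      (adj₁ x y (mul ⊤ y)).mpr (le_trans le_top ((adj₁ ⊤ y (mul ⊤ y)).mp le_rfl))
    simpa [unit_left] using h1
  -- mul x distributes over ⊔
  have distrib : ∀ x a b : P, mul x (a ⊔ b) = mul x a ⊔ mul x b := by
    intro x a b
    apply le_antisymm
    · refine (adj₂ x (a ⊔ b) _).mpr (sup_le ?_ ?_)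
      · exact (adj₂ x a _).mp le_sup_left
      · exact (adj₂ x b _).mp le_sup_right
    · exact sup_le (mono₂ x le_sup_left) (mono₂ x le_sup_right)
  intro x
  obtain ⟨y, hinf, hsup⟩ := hcompl x
  have hmy : mul x y = ⊥ :=
    le_antisymm (hinf ▸ le_inf (le_left x y) (le_right x y)) bot_le
  have : x = mul x x ⊔ mul x y := by
    calc x = mul x ⊤ := (unit_right x).symm
    _ = mul x (x ⊔ y) := by rw [hsup]
    _ = mul x x ⊔ mul x y := distrib x x y
  rw [hmy, sup_bot_eq] at this
  exact this.symm
end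

section
/- Let P be an integral residuated lattice (a bounded lattice carrying a residuated poset structure whose multiplication ⊙ has unit equal to the top element ⊤) which is complemented: every x ∈ P has some x' with x ⊓ x' = ⊥ and x ⊔ x' = ⊤. Then x ⊙ y = x ⊓ y for all x, y ∈ P. -/
/-- In a complemented integral residuated lattice, the multiplication is the meet. -/
theorem complemented_integral_residuated_mul_eq_inf
    {P : Type*} [Lattice P] [BoundedOrder P] (mul arrow larrow : P → P → P)
    (assoc : ∀ x y z : P, mul (mul x y) z = mul x (mul y z))
    (adj₁ : ∀ x y z : P, mul x y ≤ z ↔ x ≤ arrow y z)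
    (adj₂ : ∀ x y z : P, mul x y ≤ z ↔ y ≤ larrow z x)
    (unit_left : ∀ x : P, mul ⊤ x = x) (unit_right : ∀ x : P, mul x ⊤ = x)
    (hcompl : ∀ x : P, ∃ y : P, x ⊓ y = ⊥ ∧ x ⊔ y = ⊤) :
    ∀ x y : P, mul x y = x ⊓ y := by
  -- monotonicity in the left argument
  have monoL : ∀ {a b : P} (c : P), a ≤ b → mul a c ≤ mul b c := by
    intro a b c hab
    rw [adj₁]
    exact le_trans hab ((adj₁ b c (mul b c)).mp le_rfl)
  -- monotonicity in the right argument
  have monoR : ∀ (a : P) {b c : P}, b ≤ c → mul a b ≤ mul a c := by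
    intro a b c hbc
    rw [adj₂]
    exact le_trans hbc ((adj₂ a c (mul a c)).mp le_rfl)
  -- mul x y ≤ x ⊓ y
  have hle : ∀ x y : P, mul x y ≤ x ⊓ y := by
    intro x y
    refine le_inf ?_ ?_
    · have := monoR x (le_top (a := y))
      rwa [unit_right] at this
    · have := monoL y (le_top (a := x))
      rwa [unit_left] at this
  -- distribution over join in left argument (≤ direction suffices)
  have distrib : ∀ a b c : P, mul (a ⊔ b) c ≤ mul a c ⊔ mul b c := by
    intro a b c
    rw [adj₁]
    refine sup_le ?_ ?_
    · exact (adj₁ a c _).mp le_sup_left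
    · exact (adj₁ b c _).mp le_sup_right
  -- idempotence: x ≤ mul x x
  have idem : ∀ x : P, x ≤ mul x x := by
    intro x
    obtain ⟨x', hinf, hsup⟩ := hcompl x
    have h1 : x = mul (x ⊔ x') x := by rw [hsup, unit_left]
    have h2 : mul x' x ≤ ⊥ := by
      have := hle x' x
      rw [inf_comm] at this
      rwa [hinf] at this
    calc x = mul (x ⊔ x') x := h1
      _ ≤ mul x x ⊔ mul x' x := distrib x x' x
      _ ≤ mul x x ⊔ ⊥ := sup_le_sup_left h2 _
      _ = mul x x := sup_bot_eq _
  intro x y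
  refine le_antisymm (hle x y) ?_
  calc x ⊓ y ≤ mul (x ⊓ y) (x ⊓ y) := idem _
    _ ≤ mul x y := le_trans (monoL _ inf_le_left) (monoR _ inf_le_right)
end

section
/- Let P be an integral residuated lattice (a bounded lattice carrying a residuated poset structure whose multiplication ⊙ has unit equal to the top element ⊤) which is complemented: every x ∈ P has some x' with x ⊓ x' = ⊥ and x ⊔ x' = ⊤. Then the lattice P is distributive: x ⊓ (y ⊔ z) = (x ⊓ y) ⊔ (x ⊓ z) for all x, y, z ∈ P; hence P is a Boolean algebra. -/
/-- A complemented integral residuated lattice is distributive (hence a Boolean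
algebra). -/
theorem complemented_integral_residuated_distrib
    {P : Type*} [Lattice P] [BoundedOrder P] (mul arrow larrow : P → P → P)
    (assoc : ∀ x y z : P, mul (mul x y) z = mul x (mul y z))
    (adj₁ : ∀ x y z : P, mul x y ≤ z ↔ x ≤ arrow y z)
    (adj₂ : ∀ x y z : P, mul x y ≤ z ↔ y ≤ larrow z x)
    (unit_left : ∀ x : P, mul ⊤ x = x) (unit_right : ∀ x : P, mul x ⊤ = x)
    (hcompl : ∀ x : P, ∃ y : P, x ⊓ y = ⊥ ∧ x ⊔ y = ⊤) :
    ∀ x y z : P, x ⊓ (y ⊔ z) = (x ⊓ y) ⊔ (x ⊓ z) := by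
  -- monotonicity in each argument
  have mono₂ : ∀ x {a b : P}, a ≤ b → mul x a ≤ mul x b := by
    intro x a b hab
    exact (adj₂ x a (mul x b)).mpr (hab.trans ((adj₂ x b (mul x b)).mp le_rfl))
  have mono₁ : ∀ y {a b : P}, a ≤ b → mul a y ≤ mul b y := by
    intro y a b hab
    exact (adj₁ a y (mul b y)).mpr (hab.trans ((adj₁ b y (mul b y)).mp le_rfl))
  -- integrality: mul a b ≤ a ⊓ b
  have hle : ∀ a b : P, mul a b ≤ a ⊓ b := by
    intro a b
    refine le_inf ?_ ?_
    · simpa [unit_right] using mono₂ a (le_top : b ≤ ⊤)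
    · simpa [unit_left] using mono₁ b (le_top : a ≤ ⊤)
  -- mul distributes over ⊔ in the first argument
  have distrib₁ : ∀ a b c : P, mul (a ⊔ b) c = mul a c ⊔ mul b c := by
    intro a b c
    refine le_antisymm ?_ (sup_le (mono₁ c le_sup_left) (mono₁ c le_sup_right))
    refine (adj₁ (a ⊔ b) c (mul a c ⊔ mul b c)).mpr (sup_le ?_ ?_)
    · exact (adj₁ a c _).mp (le_sup_left)
    · exact (adj₁ b c _).mp (le_sup_right)
  -- mul distributes over ⊔ in the second argument
  have distrib₂ : ∀ a b c : P, mul a (b ⊔ c) = mul a b ⊔ mul a c := by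
    intro a b c
    refine le_antisymm ?_ (sup_le (mono₂ a le_sup_left) (mono₂ a le_sup_right))
    refine (adj₂ a (b ⊔ c) (mul a b ⊔ mul a c)).mpr (sup_le ?_ ?_)
    · exact (adj₂ a b _).mp (le_sup_left)
    · exact (adj₂ a c _).mp (le_sup_right)
  -- mul equals meet
  have hmul : ∀ a b : P, mul a b = a ⊓ b := by
    intro a b
    refine le_antisymm (hle a b) ?_
    obtain ⟨a', hmeet, hjoin⟩ := hcompl a
    have h1 : a ⊓ b = mul (a ⊔ a') (a ⊓ b) := by rw [hjoin, unit_left]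
    have h2 : mul a' (a ⊓ b) ≤ ⊥ := by
      calc mul a' (a ⊓ b) ≤ a' ⊓ (a ⊓ b) := hle a' (a ⊓ b)
        _ ≤ a ⊓ a' := le_inf (inf_le_right.trans inf_le_left) inf_le_left
        _ = ⊥ := hmeet
    calc a ⊓ b = mul a (a ⊓ b) ⊔ mul a' (a ⊓ b) := by rw [← distrib₁, ← h1]
      _ ≤ mul a (a ⊓ b) ⊔ ⊥ := sup_le_sup_left h2 _
      _ = mul a (a ⊓ b) := sup_bot_eq _
      _ ≤ mul a b := mono₂ a inf_le_right
  intro x y z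
  rw [← hmul x (y ⊔ z), distrib₂, hmul, hmul]
end

section
/- A complemented bounded lattice L admits an integral residuated lattice structure if and only if L is a Boolean algebra. More precisely: there exist binary operations ⊙, →, ← on L such that ⊙ is associative with unit ⊤ and the adjointness x⊙y ≤ z ⟺ x ≤ y→z ⟺ y ≤ z←x holds for all x,y,z, if and only if L is distributive (equivalently, L with its complementation is a Boolean algebra). -/
/-- A complemented bounded lattice admits an integral residuated lattice structure
if and only if it is distributive, i.e. a Boolean algebra. -/
theorem complemented_admits_integral_residuated_iff_boolean
    {L : Type*} [Lattice L] [BoundedOrder L]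
    (hcompl : ∀ x : L, ∃ y : L, x ⊓ y = ⊥ ∧ x ⊔ y = ⊤) :
    (∃ mul arrow larrow : L → L → L,
      (∀ x y z : L, mul (mul x y) z = mul x (mul y z)) ∧
      (∀ x : L, mul ⊤ x = x) ∧ (∀ x : L, mul x ⊤ = x) ∧
      (∀ x y z : L, (mul x y ≤ z ↔ x ≤ arrow y z) ∧ (mul x y ≤ z ↔ y ≤ larrow z x)))
    ↔ (∀ x y z : L, x ⊓ (y ⊔ z) = (x ⊓ y) ⊔ (x ⊓ z)) := by
  constructor
  · rintro ⟨mul, arrow, larrow, hassoc, htopl, htopr, hadj⟩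
    -- basic facts
    have hle_left : ∀ x y : L, mul x y ≤ x := by
      intro x y
      have h1 : mul x ⊤ ≤ x := le_of_eq (htopr x)
      have h2 : (⊤ : L) ≤ larrow x x := ((hadj x ⊤ x).2).mp h1
      exact ((hadj x y x).2).mpr (le_trans le_top h2)
    have hle_right : ∀ x y : L, mul x y ≤ y := by
      intro x y
      have h1 : mul ⊤ y ≤ y := le_of_eq (htopl y)
      have h2 : (⊤ : L) ≤ arrow y y := ((hadj ⊤ y y).1).mp h1
      exact ((hadj x y y).1).mpr (le_trans le_top h2)
    have hmono_left : ∀ x x' y : L, x ≤ x' → mul x y ≤ mul x' y := by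
      intro x x' y hxx
      have h2 : x' ≤ arrow y (mul x' y) := ((hadj x' y (mul x' y)).1).mp le_rfl
      exact ((hadj x y (mul x' y)).1).mpr (le_trans hxx h2)
    have hsup : ∀ x y z : L, mul x (y ⊔ z) = mul x y ⊔ mul x z := by
      intro x y z
      apply le_antisymm
      · have hy : y ≤ larrow (mul x y ⊔ mul x z) x :=
          ((hadj x y (mul x y ⊔ mul x z)).2).mp le_sup_left
        have hz : z ≤ larrow (mul x y ⊔ mul x z) x :=
          ((hadj x z (mul x y ⊔ mul x z)).2).mp le_sup_right
        exact ((hadj x (y ⊔ z) (mul x y ⊔ mul x z)).2).mpr (sup_le hy hz)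
      · have h : y ⊔ z ≤ larrow (mul x (y ⊔ z)) x :=
          ((hadj x (y ⊔ z) (mul x (y ⊔ z))).2).mp le_rfl
        exact sup_le
          (((hadj x y (mul x (y ⊔ z))).2).mpr (le_trans le_sup_left h))
          (((hadj x z (mul x (y ⊔ z))).2).mpr (le_trans le_sup_right h))
    have hmul_inf : ∀ x y : L, mul x y = x ⊓ y := by
      intro x y
      apply le_antisymm (le_inf (hle_left x y) (hle_right x y))
      obtain ⟨y', hy1, hy2⟩ := hcompl y
      have h0 : mul (x ⊓ y) y' = ⊥ := by
        apply le_bot_iff.mp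
        rw [← hy1]
        exact le_inf (le_trans (hle_left _ _) inf_le_right) (hle_right _ _)
      calc x ⊓ y = mul (x ⊓ y) (y ⊔ y') := by rw [hy2, htopr]
        _ = mul (x ⊓ y) y ⊔ mul (x ⊓ y) y' := hsup _ _ _
        _ = mul (x ⊓ y) y := by rw [h0, sup_bot_eq]
        _ ≤ mul x y := hmono_left _ _ _ inf_le_left
    intro x y z
    rw [← hmul_inf x (y ⊔ z), hsup, hmul_inf, hmul_inf]
  · intro hdist
    set c : L → L := fun x => (hcompl x).choose with hc
    have hc1 : ∀ x : L, x ⊓ c x = ⊥ := fun x => (hcompl x).choose_spec.1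
    have hc2 : ∀ x : L, x ⊔ c x = ⊤ := fun x => (hcompl x).choose_spec.2
    have key : ∀ x y z : L, x ⊓ y ≤ z ↔ x ≤ c y ⊔ z := by
      intro x y z
      constructor
      · intro h
        calc x = x ⊓ (y ⊔ c y) := by rw [hc2, inf_top_eq]
          _ = (x ⊓ y) ⊔ (x ⊓ c y) := hdist x y (c y)
          _ ≤ c y ⊔ z := sup_le (le_trans h le_sup_right) (le_trans inf_le_right le_sup_left)
      · intro h
        calc x ⊓ y ≤ (c y ⊔ z) ⊓ y := inf_le_inf_right y h
          _ = y ⊓ (c y ⊔ z) := inf_comm _ _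
          _ = (y ⊓ c y) ⊔ (y ⊓ z) := hdist y (c y) z
          _ = y ⊓ z := by rw [hc1, bot_sup_eq]
          _ ≤ z := inf_le_right
    refine ⟨fun x y => x ⊓ y, fun y z => c y ⊔ z, fun z x => c x ⊔ z,
      fun x y z => inf_assoc x y z, fun x => top_inf_eq x, fun x => inf_top_eq x,
      fun x y z => ⟨key x y z, ?_⟩⟩
    show x ⊓ y ≤ z ↔ y ≤ c x ⊔ z
    rw [inf_comm]
    exact key y x z
end

section
/- Let L be a complete lattice that is complemented (every x has x' with x ⊓ x' = ⊥ and x ⊔ x' = ⊤) and carries a quantale multiplication ⊙ (associative, distributing over arbitrary joins in both arguments) whose unit is the top element ⊤. Then x ⊙ y = x ⊓ y for all x,y, the lattice is distributive, and binary meet distributes over arbitrary joins: x ⊓ (⨆_{i} y_i) = ⨆_{i} (x ⊓ y_i). Hence L is a complete Boolean algebra. -/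
/-- A complemented complete lattice carrying an integral quantale structure (an
associative multiplication distributing over arbitrary joins, with unit `⊤`) has
`x ⊙ y = x ⊓ y`, is distributive, and binary meets distribute over arbitrary
joins; hence it is a complete Boolean algebra. -/
theorem complemented_integral_quantale_is_complete_boolean
    {L : Type*} [CompleteLattice L] (mul : L → L → L)
    (assoc : ∀ x y z : L, mul (mul x y) z = mul x (mul y z))
    (distl : ∀ (x : L) (S : Set L), mul x (sSup S) = ⨆ y ∈ S, mul x y)
    (distr : ∀ (x : L) (S : Set L), mul (sSup S) x = ⨆ y ∈ S, mul y x)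
    (unit_left : ∀ x : L, mul ⊤ x = x) (unit_right : ∀ x : L, mul x ⊤ = x)
    (hcompl : ∀ x : L, ∃ y : L, x ⊓ y = ⊥ ∧ x ⊔ y = ⊤) :
    (∀ x y : L, mul x y = x ⊓ y) ∧
    (∀ x y z : L, x ⊓ (y ⊔ z) = (x ⊓ y) ⊔ (x ⊓ z)) ∧
    (∀ (x : L) (S : Set L), x ⊓ sSup S = ⨆ y ∈ S, x ⊓ y) := by
  -- binary distributivity of mul over ⊔
  have distl2 : ∀ x y z : L, mul x (y ⊔ z) = mul x y ⊔ mul x z := by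
    intro x y z
    have := distl x {y, z}
    simpa [sSup_pair, iSup_or, iSup_sup_eq] using this
  -- monotonicity
  have monoR : ∀ x {y z : L}, y ≤ z → mul x y ≤ mul x z := by
    intro x y z h
    have : mul x z = mul x y ⊔ mul x z := by
      rw [← distl2, sup_eq_right.mpr h]
    rw [this]; exact le_sup_left
  have monoL : ∀ x {y z : L}, y ≤ z → mul y x ≤ mul z x := by
    intro x y z h
    have hd : mul (y ⊔ z) x = mul y x ⊔ mul z x := by
      have := distr x {y, z}
      simpa [sSup_pair, iSup_or, iSup_sup_eq] using this
    have : mul z x = mul y x ⊔ mul z x := by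
      rw [← hd, sup_eq_right.mpr h]
    rw [this]; exact le_sup_left
  have le_left : ∀ x y : L, mul x y ≤ x := by
    intro x y
    have := monoR x (le_top : y ≤ ⊤)
    simpa [unit_right] using this
  have le_right : ∀ x y : L, mul x y ≤ y := by
    intro x y
    have := monoL y (le_top : x ≤ ⊤)
    simpa [unit_left] using this
  -- idempotence
  have idem : ∀ a : L, mul a a = a := by
    intro a
    obtain ⟨a', hmeet, hjoin⟩ := hcompl a
    have h1 : mul a a' = ⊥ := by
      have : mul a a' ≤ a ⊓ a' := le_inf (le_left a a') (le_right a a')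
      simpa [hmeet] using le_bot_iff.mp (hmeet ▸ this)
    have : a = mul a a ⊔ mul a a' := by
      calc a = mul a ⊤ := (unit_right a).symm
        _ = mul a (a ⊔ a') := by rw [hjoin]
        _ = mul a a ⊔ mul a a' := distl2 a a a'
    rw [h1, sup_bot_eq] at this
    exact this.symm
  have key : ∀ x y : L, mul x y = x ⊓ y := by
    intro x y
    refine le_antisymm (le_inf (le_left x y) (le_right x y)) ?_
    calc x ⊓ y = mul (x ⊓ y) (x ⊓ y) := (idem _).symm
      _ ≤ mul x y := le_trans (monoL _ inf_le_left) (monoR _ inf_le_right)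
  refine ⟨key, ?_, ?_⟩
  · intro x y z
    rw [← key, distl2, key, key]
  · intro x S
    rw [← key, distl]
    exact iSup_congr fun y => iSup_congr fun _ => key x y
end

section
/- Let P be an orthomodular lattice with orthocomplementation ⊥ that simultaneously carries a unital residuated lattice structure with unit e (with respect to the same lattice order). Then any two elements below e are compatible: for all x, y ∈ P with x ≤ e and y ≤ e, x = (x ⊓ y) ⊔ (x ⊓ y⊥). -/
/-- In an orthomodular lattice carrying a unital residuated lattice structure with
unit `e`, any two elements below `e` are compatible. -/
theorem orthomodular_residuated_downset_compatible
    {P : Type*} [Lattice P] [BoundedOrder P] (oc : P → P)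
    (oc_antitone : ∀ x y : P, x ≤ y → oc y ≤ oc x)
    (oc_involutive : ∀ x : P, oc (oc x) = x)
    (oc_inf : ∀ x : P, x ⊓ oc x = ⊥) (oc_sup : ∀ x : P, x ⊔ oc x = ⊤)
    (orthomodular : ∀ x y : P, x ≤ y → y = x ⊔ (oc x ⊓ y))
    (mul arrow larrow : P → P → P)
    (assoc : ∀ x y z : P, mul (mul x y) z = mul x (mul y z))
    (adj₁ : ∀ x y z : P, mul x y ≤ z ↔ x ≤ arrow y z)
    (adj₂ : ∀ x y z : P, mul x y ≤ z ↔ y ≤ larrow z x)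
    (e : P) (unit_left : ∀ x : P, mul e x = x) (unit_right : ∀ x : P, mul x e = x) :
    ∀ x y : P, x ≤ e → y ≤ e → x = (x ⊓ y) ⊔ (x ⊓ oc y) := by
  intro x y hx hy
  -- monotonicity of mul in each argument
  have mono1 : ∀ a a' b : P, a ≤ a' → mul a b ≤ mul a' b := by
    intro a a' b h
    exact (adj₁ a b (mul a' b)).mpr (h.trans ((adj₁ a' b (mul a' b)).mp le_rfl))
  have mono2 : ∀ a b b' : P, b ≤ b' → mul a b ≤ mul a b' := by
    intro a b b' h
    exact (adj₂ a b (mul a b')).mpr (h.trans ((adj₂ a b' (mul a b')).mp le_rfl))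
  set c := oc (x ⊓ y) ⊓ x with hc
  have hcx : c ≤ x := inf_le_right
  have hce : c ≤ e := hcx.trans hx
  -- mul c y = ⊥
  have hcy : mul c y ≤ ⊥ := by
    have h1 : mul c y ≤ y := (mono1 c e y hce).trans (le_of_eq (unit_left y))
    have h2 : mul c y ≤ c := (mono2 c y e hy).trans (le_of_eq (unit_right c))
    have : mul c y ≤ (x ⊓ y) ⊓ oc (x ⊓ y) :=
      le_inf (le_inf (h2.trans hcx) h1) (h2.trans inf_le_left)
    simpa [oc_inf] using this
  -- c ≤ mul c (y ⊔ oc y)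
  have h3 : c ≤ mul c (y ⊔ oc y) := by
    have := mono2 c e (y ⊔ oc y) (by rw [oc_sup]; exact le_top)
    simpa [unit_right] using this
  -- mul c (y ⊔ oc y) ≤ mul c y ⊔ mul c (oc y)
  have h4 : mul c (y ⊔ oc y) ≤ mul c y ⊔ mul c (oc y) := by
    refine (adj₂ c (y ⊔ oc y) _).mpr (sup_le ?_ ?_)
    · exact (adj₂ c y _).mp le_sup_left
    · exact (adj₂ c (oc y) _).mp le_sup_right
  have h5 : c ≤ mul c (oc y) := by
    have := h3.trans (h4.trans (sup_le (hcy.trans bot_le) le_rfl))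
    exact this
  have h6 : c ≤ oc y := by
    have := h5.trans ((mono1 c e (oc y) hce).trans (le_of_eq (unit_left (oc y))))
    exact this
  have hom := orthomodular (x ⊓ y) x inf_le_left
  refine le_antisymm ?_ (sup_le inf_le_left inf_le_left)
  calc x = (x ⊓ y) ⊔ c := hom
    _ ≤ (x ⊓ y) ⊔ (x ⊓ oc y) := sup_le_sup_left (le_inf hcx h6) _
end

section
/- Let P be an orthomodular lattice with orthocomplementation ⊥ that simultaneously carries a unital residuated lattice structure with unit e (with respect to the same lattice order). Then any two elements of ↓e ∪ ↑(e⊥) are compatible: for all x, y ∈ P such that (x ≤ e or e⊥ ≤ x) and (y ≤ e or e⊥ ≤ y), one has x = (x ⊓ y) ⊔ (x ⊓ y⊥). -/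
/-- In an orthomodular lattice carrying a unital residuated lattice structure with
unit `e`, any two elements of `↓e ∪ ↑(e⊥)` are compatible. -/
theorem orthomodular_residuated_downset_upset_compatible
    {P : Type*} [Lattice P] [BoundedOrder P] (oc : P → P)
    (oc_antitone : ∀ x y : P, x ≤ y → oc y ≤ oc x)
    (oc_involutive : ∀ x : P, oc (oc x) = x)
    (oc_inf : ∀ x : P, x ⊓ oc x = ⊥) (oc_sup : ∀ x : P, x ⊔ oc x = ⊤)
    (orthomodular : ∀ x y : P, x ≤ y → y = x ⊔ (oc x ⊓ y))
    (mul arrow larrow : P → P → P)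
    (assoc : ∀ x y z : P, mul (mul x y) z = mul x (mul y z))
    (adj₁ : ∀ x y z : P, mul x y ≤ z ↔ x ≤ arrow y z)
    (adj₂ : ∀ x y z : P, mul x y ≤ z ↔ y ≤ larrow z x)
    (e : P) (unit_left : ∀ x : P, mul e x = x) (unit_right : ∀ x : P, mul x e = x) :
    ∀ x y : P, (x ≤ e ∨ oc e ≤ x) → (y ≤ e ∨ oc e ≤ y) →
      x = (x ⊓ y) ⊔ (x ⊓ oc y) := by
  intro x y hx hy
  -- De Morgan laws
  have dm_sup : ∀ c d : P, oc (c ⊔ d) = oc c ⊓ oc d := by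
    intro c d
    refine le_antisymm (le_inf (oc_antitone _ _ le_sup_left) (oc_antitone _ _ le_sup_right)) ?_
    have h1 : c ⊔ d ≤ oc (oc c ⊓ oc d) := by
      refine sup_le ?_ ?_
      · have := oc_antitone _ _ (inf_le_left : oc c ⊓ oc d ≤ oc c)
        rwa [oc_involutive] at this
      · have := oc_antitone _ _ (inf_le_right : oc c ⊓ oc d ≤ oc d)
        rwa [oc_involutive] at this
    have := oc_antitone _ _ h1
    rwa [oc_involutive] at this
  have dm_inf : ∀ c d : P, oc (c ⊓ d) = oc c ⊔ oc d := by
    intro c d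
    have h := dm_sup (oc c) (oc d)
    rw [oc_involutive, oc_involutive] at h
    rw [← h, oc_involutive]
  -- Key orthomodular lemma: a ≤ (a ⊓ b) ⊔ b' implies b is compatible with a.
  have L4 : ∀ a b : P, a ≤ (a ⊓ b) ⊔ oc b → b = (b ⊓ a) ⊔ (b ⊓ oc a) := by
    intro a b h
    have om := orthomodular (a ⊓ b) b inf_le_right
    have key : oc (a ⊓ b) ⊓ b ≤ oc a := by
      have h2 : a ≤ oc (oc (a ⊓ b) ⊓ b) := by
        rw [dm_inf, oc_involutive]; exact h
      have := oc_antitone _ _ h2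
      rwa [oc_involutive] at this
    have h3 : b ≤ (b ⊓ a) ⊔ (b ⊓ oc a) := by
      calc b = (a ⊓ b) ⊔ (oc (a ⊓ b) ⊓ b) := om
        _ ≤ (b ⊓ a) ⊔ (b ⊓ oc a) :=
            sup_le_sup (le_of_eq (inf_comm a b)) (le_inf inf_le_right key)
    exact le_antisymm h3 (sup_le inf_le_left inf_le_left)
  -- Applying L4 twice gives compatibility of a with b.
  have L5 : ∀ a b : P, a ≤ (a ⊓ b) ⊔ oc b → a = (a ⊓ b) ⊔ (a ⊓ oc b) := by
    intro a b h
    have h1 := L4 a b h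
    have h2 : b ≤ (b ⊓ a) ⊔ oc a := h1.le.trans (sup_le_sup_left inf_le_right _)
    exact L4 b a h2
  -- monotonicity of mul
  have mono_right : ∀ u v w : P, v ≤ w → mul u v ≤ mul u w := by
    intro u v w hvw
    exact (adj₂ u v (mul u w)).2 (hvw.trans ((adj₂ u w (mul u w)).1 le_rfl))
  have mono_left : ∀ u v w : P, u ≤ v → mul u w ≤ mul v w := by
    intro u v w huv
    exact (adj₁ u w (mul v w)).2 (huv.trans ((adj₁ v w (mul v w)).1 le_rfl))
  -- The residuated structure forces a ≤ (a ⊓ b) ⊔ b' for a, b ≤ e.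
  have M : ∀ a b : P, a ≤ e → b ≤ e → a ≤ (a ⊓ b) ⊔ oc b := by
    intro a b ha hb
    have h1 : a ≤ mul a (b ⊔ oc b) := by
      rw [oc_sup b]
      calc a = mul a e := (unit_right a).symm
        _ ≤ mul a ⊤ := mono_right a e ⊤ le_top
    have h2 : mul a (b ⊔ oc b) ≤ mul a b ⊔ mul a (oc b) :=
      (adj₂ a _ _).2 (sup_le ((adj₂ a b _).1 le_sup_left) ((adj₂ a (oc b) _).1 le_sup_right))
    have h3 : mul a b ≤ a ⊓ b := le_inf
      (by calc mul a b ≤ mul a e := mono_right a b e hb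
            _ = a := unit_right a)
      (by calc mul a b ≤ mul e b := mono_left a e b ha
            _ = b := unit_left b)
    have h4 : mul a (oc b) ≤ oc b := by
      calc mul a (oc b) ≤ mul e (oc b) := mono_left a e (oc b) ha
        _ = oc b := unit_left (oc b)
    exact h1.trans (h2.trans (sup_le_sup h3 h4))
  have hxe : ∀ z : P, oc e ≤ z → oc z ≤ e := by
    intro z hz
    have := oc_antitone _ _ hz
    rwa [oc_involutive] at this
  rcases hx with hx | hx <;> rcases hy with hy | hy
  · exact L5 x y (M x y hx hy)
  · -- x ≤ e, oc e ≤ y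
    have h := L5 x (oc y) (M x (oc y) hx (hxe y hy))
    rw [oc_involutive] at h
    exact h.trans (sup_comm _ _)
  · -- oc e ≤ x, y ≤ e
    have h1 := M (oc x) y (hxe x hx) hy
    have h2 := L4 (oc x) y h1
    rw [oc_involutive] at h2
    have h3 : y ≤ (y ⊓ x) ⊔ oc x :=
      h2.le.trans (sup_le (inf_le_right.trans le_sup_right) le_sup_left)
    have h4 := L4 y x h3
    exact h4
  · -- oc e ≤ x, oc e ≤ y
    have h1 := M (oc x) (oc y) (hxe x hx) (hxe y hy)
    have h2 := L4 (oc x) (oc y) h1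
    rw [oc_involutive] at h2
    have h3 : oc y ≤ (oc y ⊓ x) ⊔ oc x :=
      h2.le.trans (sup_le (inf_le_right.trans le_sup_right) le_sup_left)
    have h4 := L4 (oc y) x h3
    rw [oc_involutive] at h4
    exact h4.trans (sup_comm _ _)
end

section
/- Let n ∈ ℕ. Consider ℝⁿ as the commutative ℝ-algebra Fin n → ℝ with pointwise operations, and let submodules (over ℝ) be multiplied by S * T = span{s·t | s ∈ S, t ∈ T}. Let D be the submodule {a : Fin n → ℝ | ∑ᵢ a i = 0}. Then for every submodule S of Fin n → ℝ and every a : Fin n → ℝ: a belongs to the supremum sSup {T | T * S ≤ D} if and only if ∑ᵢ a i · s i = 0 for every s ∈ S. In other words, the linear negation S° = sSup {T | T * S ≤ D} coincides with the orthogonal complement of S with respect to the Euclidean inner product. -/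
/-- For submodules of `ℝⁿ = Fin n → ℝ` (a commutative ℝ-algebra with pointwise
operations, submodules multiplied by `S * T = span {s·t | s ∈ S, t ∈ T}`) and `D`
the submodule of vectors with coordinate sum zero, the linear negation
`S° = sSup {T | T * S ≤ D}` coincides with the Euclidean orthogonal complement. -/
theorem linear_negation_eq_orthogonal_complement (n : ℕ)
    (hmul : ∀ S T : Submodule ℝ (Fin n → ℝ),
      S * T = Submodule.span ℝ {p | ∃ s ∈ S, ∃ t ∈ T, p = s * t})
    (D : Submodule ℝ (Fin n → ℝ))
    (hD : ∀ a : Fin n → ℝ, a ∈ D ↔ ∑ i, a i = 0) :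
    ∀ (S : Submodule ℝ (Fin n → ℝ)) (a : Fin n → ℝ),
      a ∈ sSup {T : Submodule ℝ (Fin n → ℝ) | T * S ≤ D} ↔
        ∀ s ∈ S, ∑ i, a i * s i = 0 := by
  intro S a
  set O : Submodule ℝ (Fin n → ℝ) :=
    { carrier := {b | ∀ s ∈ S, ∑ i, b i * s i = 0}
      add_mem' := by
        intro x y hx hy s hs
        simp only [Pi.add_apply, add_mul, Finset.sum_add_distrib, hx s hs, hy s hs, add_zero]
      zero_mem' := by intro s hs; simp
      smul_mem' := by
        intro c x hx s hs
        simp only [Pi.smul_apply, smul_eq_mul, mul_assoc, ← Finset.mul_sum, hx s hs, mul_zero] }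
    with hO
  have hOS : O * S ≤ D := by
    rw [hmul, Submodule.span_le]
    rintro p ⟨t, ht, s, hs, rfl⟩
    rw [SetLike.mem_coe, hD]
    exact ht s hs
  have hsup : sSup {T : Submodule ℝ (Fin n → ℝ) | T * S ≤ D} = O := by
    apply le_antisymm
    · apply sSup_le
      intro T hT b hb s hs
      have : T * S ≤ D := hT
      have hmem : b * s ∈ T * S := by
        rw [hmul]
        exact Submodule.subset_span ⟨b, hb, s, hs, rfl⟩
      have := (hD _).mp (this hmem)
      simpa using this
    · exact le_sSup hOS
  rw [hsup]
  exact Iff.rfl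
end

section
/- Let n ∈ ℕ. Consider ℝⁿ as the commutative ℝ-algebra Fin n → ℝ with pointwise operations, with submodule multiplication S * T = span{s·t | s ∈ S, t ∈ T}, and let D be the submodule {a : Fin n → ℝ | ∑ᵢ a i = 0}. Define S° = sSup {T | T * S ≤ D} for each submodule S. Then (S°)° = S for every submodule S of Fin n → ℝ; that is, D is a dualizing element of the quantale of submodules of ℝⁿ. -/
/-!
`T * S ≤ D` says exactly that every vector of `T` is orthogonal to `S` for the dot product, so
`S°` is the orthogonal complement of `S` for this symmetric nondegenerate bilinear form, and in
finite dimension taking the orthogonal complement twice gives back `S`.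
-/

open Matrix LinearMap

namespace Matrix

variable {R ι : Type*} [CommSemiring R] [Fintype ι]

theorem isSymm_dotProductBilin :
    BilinForm.IsSymm (dotProductBilin R R : LinearMap.BilinForm R (ι → R)) :=
  ⟨dotProduct_comm⟩

theorem nondegenerate_dotProductBilin :
    (dotProductBilin R R : LinearMap.BilinForm R (ι → R)).Nondegenerate := by
  classical
  exact ⟨fun x hx ↦ funext fun i ↦ by simpa using hx (Pi.single i 1),
    fun y hy ↦ funext fun i ↦ by simpa using hy (Pi.single i 1)⟩

end Matrix

namespace Submodule

variable {R ι : Type*} [CommSemiring R] [Fintype ι] {D : Submodule R (ι → R)}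

theorem mul_le_iff_le_orthogonal_dotProductBilin (hD : ∀ a, a ∈ D ↔ ∑ i, a i = 0)
    (S T : Submodule R (ι → R)) :
    T * S ≤ D ↔ T ≤ BilinForm.orthogonal (dotProductBilin R R) S := by
  rw [mul_le, SetLike.le_def]
  refine forall₂_congr fun t _ ↦ forall₂_congr fun s _ ↦ ?_
  rw [hD, dotProductBilin_apply_apply, dotProduct_comm]
  rfl

theorem sSup_setOf_mul_le_eq_orthogonal_dotProductBilin (hD : ∀ a, a ∈ D ↔ ∑ i, a i = 0)
    (S : Submodule R (ι → R)) :
    sSup {T | T * S ≤ D} = BilinForm.orthogonal (dotProductBilin R R) S := by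
  simp_rw [mul_le_iff_le_orthogonal_dotProductBilin hD]
  exact isGreatest_Iic.csSup_eq

end Submodule

theorem sum_zero_submodule_is_dualizing_general (n : ℕ)
    (D : Submodule ℝ (Fin n → ℝ))
    (hD : ∀ a : Fin n → ℝ, a ∈ D ↔ ∑ i, a i = 0) :
    ∀ S : Submodule ℝ (Fin n → ℝ),
      sSup {T : Submodule ℝ (Fin n → ℝ) |
        T * sSup {T' : Submodule ℝ (Fin n → ℝ) | T' * S ≤ D} ≤ D} = S := by
  intro S
  simp only [Submodule.sSup_setOf_mul_le_eq_orthogonal_dotProductBilin hD]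
  exact BilinForm.orthogonal_orthogonal nondegenerate_dotProductBilin
    isSymm_dotProductBilin.isRefl S

/-- For submodules of `ℝⁿ = Fin n → ℝ` (with submodule multiplication
`S * T = span {s·t | s ∈ S, t ∈ T}`) and `D` the submodule of vectors with
coordinate sum zero, the linear negation `S° = sSup {T | T * S ≤ D}` satisfies
`(S°)° = S`; that is, `D` is a dualizing element of the quantale of submodules. -/
theorem sum_zero_submodule_is_dualizing (n : ℕ)
    (hmul : ∀ S T : Submodule ℝ (Fin n → ℝ),
      S * T = Submodule.span ℝ {p | ∃ s ∈ S, ∃ t ∈ T, p = s * t})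
    (D : Submodule ℝ (Fin n → ℝ))
    (hD : ∀ a : Fin n → ℝ, a ∈ D ↔ ∑ i, a i = 0) :
    ∀ S : Submodule ℝ (Fin n → ℝ),
      sSup {T : Submodule ℝ (Fin n → ℝ) |
        T * sSup {T' : Submodule ℝ (Fin n → ℝ) | T' * S ≤ D} ≤ D} = S :=
  sum_zero_submodule_is_dualizing_general n D hD
end
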